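/- Let {z_t} be a real-valued sequence satisfying z_{t+1} ≤ (1 − α_t) z_t + α_t ε_t for all t, where {α_t} and {ε_t} are real sequences with α_t ∈ [0,1] for all t and ∑_{t≥0} α_t = ∞, and suppose there exists a constant R > 0 with limsup_{t→∞} ε_t ≤ R. Then limsup_{t→∞} z_t ≤ R. -/

import Mathlib

/-!
Past the time after which `ε t < c`, the recursion makes `z t - c` contract by the factor
`1 - α t` at each step, so `z t - c` is at most `∏ (1 - α s) ≤ exp (-∑ α s)` times its
initial positive part, which tends to `0` because `∑ α s` diverges. Hence `limsup z ≤ c`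
for every real `c > limsup ε`.
-/

open Filter Finset Topology

lemma prod_one_sub_le_exp_neg_sum {ι : Type*} (s : Finset ι) {α : ι → ℝ}
    (hα : ∀ i ∈ s, α i ≤ 1) : ∏ i ∈ s, (1 - α i) ≤ Real.exp (-∑ i ∈ s, α i) := by
  rw [← sum_neg_distrib, Real.exp_sum]
  exact prod_le_prod (fun i hi => sub_nonneg.2 (hα i hi))
    fun i _ => by linarith [Real.add_one_le_exp (-α i)]

lemma tendsto_prod_Ico_one_sub_of_tendsto_sum {α : ℕ → ℝ} (hα : ∀ t, α t ≤ 1)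
    (hdiv : Tendsto (fun n => ∑ t ∈ range n, α t) atTop atTop) (T : ℕ) :
    Tendsto (fun n => ∏ t ∈ Ico T n, (1 - α t)) atTop (𝓝 0) := by
  have hsum : Tendsto (fun n => ∑ t ∈ Ico T n, α t) atTop atTop := by
    refine (tendsto_atTop_add_const_right _ (-∑ t ∈ range T, α t) hdiv).congr' ?_
    filter_upwards [eventually_ge_atTop T] with n hn
    rw [sum_Ico_eq_sub _ hn, sub_eq_add_neg]
  have hexp : Tendsto (fun n => Real.exp (-∑ t ∈ Ico T n, α t)) atTop (𝓝 0) :=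
    Real.tendsto_exp_atBot.comp (tendsto_neg_atTop_atBot.comp hsum)
  exact tendsto_of_tendsto_of_tendsto_of_le_of_le tendsto_const_nhds hexp
    (fun n => prod_nonneg fun t _ => sub_nonneg.2 (hα t))
    (fun n => prod_one_sub_le_exp_neg_sum _ fun t _ => hα t)

lemma le_prod_Ico_mul_of_le_mul {x a : ℕ → ℝ} {T : ℕ} (ha : ∀ t, T ≤ t → 0 ≤ a t)
    (hx : ∀ t, T ≤ t → x (t + 1) ≤ a t * x t) {t : ℕ} (ht : T ≤ t) :
    x t ≤ (∏ s ∈ Ico T t, a s) * max (x T) 0 := by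
  induction t, ht using Nat.le_induction with
  | base => simp
  | succ t ht ih =>
    calc x (t + 1) ≤ a t * x t := hx t ht
      _ ≤ a t * ((∏ s ∈ Ico T t, a s) * max (x T) 0) := mul_le_mul_of_nonneg_left ih (ha t ht)
      _ = (∏ s ∈ Ico T (t + 1), a s) * max (x T) 0 := by rw [prod_Ico_succ_top ht]; ring

lemma limsup_le_of_eventually_sub_le_mul_sub {z α : ℕ → ℝ} {c : ℝ} (hα : ∀ t, α t ≤ 1)
    (hdiv : Tendsto (fun n => ∑ t ∈ range n, α t) atTop atTop)
    (hrec : ∀ᶠ t in atTop, z (t + 1) - c ≤ (1 - α t) * (z t - c)) :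
    limsup (fun t => (z t : EReal)) atTop ≤ c := by
  obtain ⟨T, hT⟩ := eventually_atTop.1 hrec
  set M := max (z T - c) 0
  have hbound : ∀ᶠ t in atTop,
      (z t : EReal) ≤ ((c + (∏ s ∈ Ico T t, (1 - α s)) * M : ℝ) : EReal) := by
    filter_upwards [eventually_ge_atTop T] with t ht
    have := le_prod_Ico_mul_of_le_mul (x := fun t => z t - c) (fun s _ => sub_nonneg.2 (hα s)) hT ht
    exact EReal.coe_le_coe_iff.2 (by linarith)
  have hlim : Tendsto (fun t => ((c + (∏ s ∈ Ico T t, (1 - α s)) * M : ℝ) : EReal))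
      atTop (𝓝 c) := by
    refine EReal.tendsto_coe.2 ?_
    simpa using ((tendsto_prod_Ico_one_sub_of_tendsto_sum hα hdiv T).mul_const M).const_add c
  exact (limsup_le_limsup hbound).trans hlim.limsup_eq.le

theorem limsup_le_limsup_of_le_one_sub_mul_add_mul {z α ε : ℕ → ℝ}
    (hα : ∀ t, α t ∈ Set.Icc (0 : ℝ) 1)
    (hdiv : Tendsto (fun n => ∑ t ∈ range n, α t) atTop atTop)
    (hrec : ∀ t, z (t + 1) ≤ (1 - α t) * z t + α t * ε t) :
    limsup (fun t => (z t : EReal)) atTop ≤ limsup (fun t => (ε t : EReal)) atTop := by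
  refine EReal.le_of_forall_lt_iff_le.1 fun c hc => ?_
  refine limsup_le_of_eventually_sub_le_mul_sub (fun t => (hα t).2) hdiv ?_
  filter_upwards [eventually_lt_of_limsup_lt hc] with t ht
  have : α t * ε t ≤ α t * c := mul_le_mul_of_nonneg_left (EReal.coe_lt_coe_iff.1 ht).le (hα t).1
  linarith [hrec t]

theorem limsup_le_of_recursive_bound_general (z α ε : ℕ → ℝ) (R : ℝ)
    (hα : ∀ t, α t ∈ Set.Icc (0 : ℝ) 1)
    (hαdiv : Tendsto (fun T => ∑ t ∈ Finset.range T, α t) atTop atTop)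
    (hrec : ∀ t, z (t + 1) ≤ (1 - α t) * z t + α t * ε t)
    (hε : limsup (fun t => (ε t : EReal)) atTop ≤ (R : EReal)) :
    limsup (fun t => (z t : EReal)) atTop ≤ (R : EReal) :=
  (limsup_le_limsup_of_le_one_sub_mul_add_mul hα hαdiv hrec).trans hε

/-- Proposition `decsup`. If `z_{t+1} ≤ (1 − α_t) z_t + α_t ε_t` with
`α_t ∈ [0,1]`, `∑ α_t = ∞`, and `limsup ε_t ≤ R` for some constant `R > 0`, then
`limsup z_t ≤ R`.  (The limsups are taken in the extended reals so that they are
well-defined for arbitrary real sequences.) -/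
theorem limsup_le_of_recursive_bound (z α ε : ℕ → ℝ) (R : ℝ) (hR : 0 < R)
    (hα : ∀ t, α t ∈ Set.Icc (0 : ℝ) 1)
    (hαdiv : Tendsto (fun T => ∑ t ∈ Finset.range T, α t) atTop atTop)
    (hrec : ∀ t, z (t + 1) ≤ (1 - α t) * z t + α t * ε t)
    (hε : limsup (fun t => (ε t : EReal)) atTop ≤ (R : EReal)) :
    limsup (fun t => (z t : EReal)) atTop ≤ (R : EReal) :=
  limsup_le_of_recursive_bound_general z α ε R hα hαdiv hrec hε
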